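/- arXiv:1610.09993 — 8 statements merged into one kernel-verified Lean document; each statement's English description precedes it below -/
import Mathlib

section
/- Suppose some edge of G joins a looped vertex to an unlooped vertex, i.e., there exist vertices i, j with ii ∈ E, jj ∉ E and ij ∈ E. Then for every integer r with 1 ≤ r ≤ n, the set P(S^n_{r+}) is not closed. -/
open Matrix

/-- PSD matrices of rank at most `r`, indexed by a finite type. -/
def psdRank (ι : Type) [Fintype ι] [DecidableEq ι] (r : ℕ) : Set (Matrix ι ι ℝ) :=
  {X | X.PosSemidef ∧ X.rank ≤ r}

/-- Coordinate projection onto the entries indexed by `E`. -/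
def proj {n : ℕ} (E : Set (Fin n × Fin n)) (X : Matrix (Fin n) (Fin n) ℝ) : E → ℝ :=
  fun p => X p.1.1 p.1.2

/-- The simple graph underlying the index set `E` (loops discarded). -/
def graphOf {n : ℕ} (E : Set (Fin n × Fin n)) : SimpleGraph (Fin n) where
  Adj i j := i ≠ j ∧ ((i, j) ∈ E ∨ (j, i) ∈ E)
  symm := by
    constructor
    intro i j h
    exact ⟨h.1.symm, h.2.symm⟩
  loopless := by
    constructor
    intro i h
    exact h.1 rfl

/-!
For `t ≠ 0` the rank-one matrix `v vᵀ` with `v = t eᵢ + t⁻¹ eⱼ` has entries `t²` at `ii`, `1` at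
`ij` and `ji`, and `t⁻²` at `jj`. Since `jj ∉ E`, the blow-up at `jj` is invisible to `P`, so as
`t → 0` the projections converge to `P (eᵢ eⱼᵀ + eⱼ eᵢᵀ)`. That point is not in the image of any
positive semidefinite matrix `X`: it forces `X i i = 0` together with `X i j = 1`, whereas a zero
diagonal entry of a PSD matrix kills its whole row.
-/

open Filter Topology

lemma Matrix.PosSemidef.apply_eq_zero_of_diag_eq_zero {ι : Type*} [Fintype ι]
    {A : Matrix ι ι ℝ} (hA : A.PosSemidef) {i : ι} (hii : A i i = 0) (j : ι) : A i j = 0 := by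
  classical
  by_contra hij
  have hsymm : A j i = A i j := hA.1.apply i j
  -- On `t • eᵢ + eⱼ` the quadratic form is `2 t A i j + A j j`, negative for this `t`.
  set t : ℝ := -(A j j + 1) / (2 * A i j) with ht_def
  have hquad := hA.dotProduct_mulVec_nonneg (Pi.single i t + Pi.single j 1)
  simp only [star_trivial, mulVec_add, mulVec_single, dotProduct_add, add_dotProduct,
    single_dotProduct, MulOpposite.smul_eq_mul_unop, MulOpposite.unop_op,
    Pi.smul_apply, col_apply, hii, hsymm] at hquad
  have ht : t * A i j = -(A j j + 1) / 2 := by rw [ht_def]; field_simp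
  linarith

lemma Matrix.vecMulVec_single_single {ι R : Type*} [DecidableEq ι] [MulZeroClass R]
    (i j : ι) (a b : R) : vecMulVec (Pi.single i a) (Pi.single j b) = single i j (a * b) := by
  ext k l
  by_cases hk : i = k <;> by_cases hl : j = l <;> simp [vecMulVec_apply, hk, hl, eq_comm]

lemma vecMulVec_self_mem_psdRank {ι : Type} [Fintype ι] [DecidableEq ι] (v : ι → ℝ) {r : ℕ}
    (hr : 1 ≤ r) : vecMulVec v v ∈ psdRank ι r :=
  ⟨by simpa using posSemidef_vecMulVec_self_star v, (rank_vecMulVec_le v v).trans hr⟩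

section proj

variable {n : ℕ} {E : Set (Fin n × Fin n)}

lemma proj_add (A B : Matrix (Fin n) (Fin n) ℝ) : proj E (A + B) = proj E A + proj E B := rfl

lemma proj_single_of_notMem {a b : Fin n} (h : (a, b) ∉ E) (c : ℝ) :
    proj E (single a b c) = 0 := by
  ext ⟨⟨k, l⟩, hkl⟩
  have : ¬(a = k ∧ b = l) := by rintro ⟨rfl, rfl⟩; exact h hkl
  simp [proj, this]

lemma continuous_proj : Continuous (proj E) :=
  continuous_pi fun p => continuous_apply_apply p.1.1 p.1.2

variable {i j : Fin n}

lemma proj_rankOne_eq (hj : (j, j) ∉ E) {t : ℝ} (ht : t ≠ 0) :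
    proj E (vecMulVec (Pi.single i t + Pi.single j t⁻¹) (Pi.single i t + Pi.single j t⁻¹)) =
      proj E ((t * t) • single i i 1 + (single i j 1 + single j i 1)) := by
  simp only [vecMulVec_add, add_vecMulVec, vecMulVec_single_single, mul_inv_cancel₀ ht,
    inv_mul_cancel₀ ht, smul_single, smul_eq_mul, mul_one, proj_add, proj_single_of_notMem hj]
  abel

lemma proj_offDiag_mem_closure (hj : (j, j) ∉ E) {r : ℕ} (hr : 1 ≤ r) :
    proj E (single i j 1 + single j i 1) ∈ closure (proj E '' psdRank (Fin n) r) := by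
  have hcont : Continuous fun t : ℝ =>
      proj E ((t * t) • single i i 1 + (single i j 1 + single j i 1)) :=
    continuous_proj.comp (by fun_prop)
  have hpath := tendsto_nhdsWithin_of_tendsto_nhds (s := {0}ᶜ) (hcont.tendsto 0)
  simp only [mul_zero, zero_smul, zero_add] at hpath
  refine mem_closure_of_tendsto hpath ?_
  filter_upwards [self_mem_nhdsWithin] with t ht
  rw [← proj_rankOne_eq hj ht]
  exact Set.mem_image_of_mem _ (vecMulVec_self_mem_psdRank _ hr)

lemma proj_ne_proj_offDiag (hne : i ≠ j) (hi : (i, i) ∈ E) (hij : (i, j) ∈ E ∨ (j, i) ∈ E)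
    {X : Matrix (Fin n) (Fin n) ℝ} (hX : X.PosSemidef) :
    proj E X ≠ proj E (single i j 1 + single j i 1) := by
  intro hXS
  have hii : X i i = 0 := by
    simpa [proj, single_apply, hne.symm] using congrFun hXS ⟨(i, i), hi⟩
  have hXij : X i j = 1 := by
    rcases hij with h | h
    · simpa [proj, single_apply, hne] using congrFun hXS ⟨(i, j), h⟩
    · rw [← hX.1.apply i j, star_trivial]
      simpa [proj, single_apply, hne] using congrFun hXS ⟨(j, i), h⟩
  simpa [hXij] using hX.apply_eq_zero_of_diag_eq_zero hii j

end proj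

theorem stmt2_general (n : ℕ) (E : Set (Fin n × Fin n))
    (i j : Fin n) (hi : (i, i) ∈ E) (hj : (j, j) ∉ E)
    (hij : (i, j) ∈ E ∨ (j, i) ∈ E)
    (r : ℕ) (hr1 : 1 ≤ r) :
    ¬ IsClosed (proj E '' psdRank (Fin n) r) := by
  have hne : i ≠ j := by rintro rfl; exact hj hi
  intro hclosed
  obtain ⟨X, hX, hXS⟩ := hclosed.closure_subset (proj_offDiag_mem_closure hj hr1)
  exact proj_ne_proj_offDiag hne hi hij hX.1 hXS

/-- If some edge of `G` joins a looped vertex to an unlooped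
vertex, then for every integer `r` with `1 ≤ r ≤ n` the set `P(Sⁿᵣ₊)` is not
closed. -/
theorem stmt2 (n : ℕ) (hn : 2 ≤ n) (E : Set (Fin n × Fin n))
    (hup : ∀ p ∈ E, p.1 ≤ p.2)
    (i j : Fin n) (hi : (i, i) ∈ E) (hj : (j, j) ∉ E)
    (hij : (i, j) ∈ E ∨ (j, i) ∈ E)
    (r : ℕ) (hr1 : 1 ≤ r) (hrn : r ≤ n) :
    ¬ IsClosed (proj E '' psdRank (Fin n) r) :=
  stmt2_general n E i j hi hj hij r hr1
end

section
/- Let H_1,…,H_k be a partition of V = {1,…,n} such that every pair ij ∈ E has both endpoints in the same block H_i, and set n_i = |H_i|. Then P(S^n_{r+}) is closed if and only if for every i = 1,…,k the restricted projection P_{H_i}(S^{n_i}_{r+}) is closed, where P_{H_i} : S^{n_i} → ℝ^{E_i} is the coordinate projection onto the pairs E_i of E with both endpoints in H_i. -/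
open Matrix

/-!
A PSD matrix of rank at most `r` is exactly a Gram matrix `B Bᵀ` of vectors in `ℝʳ`. Since every
pair of `E` lies inside a block, the entries seen by `P` only involve Gram products within a block,
and Gram factorizations of the blocks can be stacked into one of the whole matrix. Hence
`P(Sⁿᵣ₊)` is the product of the sets `P_{H_i}(S^{n_i}ᵣ₊)`: it is the intersection of their preimages
under the continuous restriction maps, and conversely each of them is the preimage of `P(Sⁿᵣ₊)`
under extension by zero (glue with zero blocks). Closedness therefore passes in both directions.
-/

theorem Matrix.IsHermitian.apply_eq_sum_eigenvalues {ι : Type*} [Fintype ι] [DecidableEq ι]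
    {A : Matrix ι ι ℝ} (hA : A.IsHermitian) (u v : ι) :
    A u v = ∑ i, hA.eigenvectorUnitary.1 u i * hA.eigenvalues i * hA.eigenvectorUnitary.1 v i := by
  conv_lhs => rw [hA.spectral_theorem]
  simp [Matrix.mul_apply, Matrix.diagonal_apply]

theorem Matrix.PosSemidef.exists_eq_mul_transpose_of_rank_le {ι : Type*} [Fintype ι]
    [DecidableEq ι] {X : Matrix ι ι ℝ} (hX : X.PosSemidef) {r : ℕ} (hr : X.rank ≤ r) :
    ∃ B : Matrix ι (Fin r) ℝ, X = B * Bᵀ := by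
  set U := hX.isHermitian.eigenvectorUnitary.1
  set d := hX.isHermitian.eigenvalues
  have hcard : Fintype.card {i // d i ≠ 0} ≤ Fintype.card (Fin r) := by
    rwa [Fintype.card_fin, ← hX.isHermitian.rank_eq_card_non_zero_eigs]
  obtain ⟨f⟩ := Function.Embedding.nonempty_of_card_le hcard
  -- column `f i` is `√(d i) • U_i` for `d i ≠ 0`; the columns outside the range of `f` vanish
  refine ⟨Matrix.of fun v => Function.extend f (fun i => U v i * √(d i)) 0, ?_⟩
  ext u v
  rw [hX.isHermitian.apply_eq_sum_eigenvalues, Matrix.mul_apply]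
  symm
  simp only [transpose_apply, of_apply]
  calc ∑ j, Function.extend f (fun i => U u i * √(d i)) 0 j *
        Function.extend f (fun i => U v i * √(d i)) 0 j
      = ∑ i : {i // d i ≠ 0}, U u i * d i * U v i := by
        refine (Fintype.sum_of_injective f f.injective _ _ (fun j hj => ?_) fun i => ?_).symm
        · rw [Function.extend_apply' _ _ _ hj]
          simp
        · rw [f.injective.extend_apply, f.injective.extend_apply]
          linear_combination -(U u i * U v i) * Real.mul_self_sqrt (hX.eigenvalues_nonneg i.1)
    _ = ∑ i, U u i * d i * U v i :=
        Fintype.sum_of_injective _ Subtype.val_injective _ _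
          (fun i hi => by simp [not_not.mp fun h => hi ⟨⟨i, h⟩, rfl⟩]) fun _ => rfl

section psdRank

variable {ι : Type} [Fintype ι] [DecidableEq ι] {r : ℕ}

theorem mem_psdRank_iff_exists_eq_mul_transpose {X : Matrix ι ι ℝ} :
    X ∈ psdRank ι r ↔ ∃ B : Matrix ι (Fin r) ℝ, X = B * Bᵀ := by
  refine ⟨fun hX => hX.1.exists_eq_mul_transpose_of_rank_le hX.2, ?_⟩
  rintro ⟨B, rfl⟩
  refine ⟨by simpa using posSemidef_self_mul_conjTranspose B, ?_⟩
  calc (B * Bᵀ).rank ≤ B.rank := rank_mul_le_left _ _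
    _ ≤ r := (rank_le_card_width B).trans_eq (Fintype.card_fin r)

theorem zero_mem_psdRank : (0 : Matrix ι ι ℝ) ∈ psdRank ι r :=
  mem_psdRank_iff_exists_eq_mul_transpose.mpr ⟨0, by simp⟩

theorem submatrix_mem_psdRank {κ : Type} [Fintype κ] [DecidableEq κ] {X : Matrix ι ι ℝ}
    (hX : X ∈ psdRank ι r) (g : κ → ι) : X.submatrix g g ∈ psdRank κ r := by
  obtain ⟨B, rfl⟩ := mem_psdRank_iff_exists_eq_mul_transpose.mp hX
  exact mem_psdRank_iff_exists_eq_mul_transpose.mpr ⟨B.submatrix g id, rfl⟩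

theorem exists_mem_psdRank_submatrix_eq {κ : Type} [DecidableEq κ] (c : ι → κ)
    (X : ∀ j, Matrix {v // c v = j} {v // c v = j} ℝ) (hX : ∀ j, X j ∈ psdRank _ r) :
    ∃ Y ∈ psdRank ι r, ∀ j, Y.submatrix Subtype.val Subtype.val = X j := by
  choose B hB using fun j => mem_psdRank_iff_exists_eq_mul_transpose.mp (hX j)
  set M : Matrix ι (Fin r) ℝ := Matrix.of fun v => B (c v) ⟨v, rfl⟩
  have hM : ∀ j v (h : c v = j), M v = B j ⟨v, h⟩ := by
    rintro _ v rfl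
    rfl
  refine ⟨M * Mᵀ, mem_psdRank_iff_exists_eq_mul_transpose.mpr ⟨M, rfl⟩, fun j => ?_⟩
  ext ⟨u, hu⟩ ⟨v, hv⟩
  simp only [hB, submatrix_apply, mul_apply, transpose_apply, hM j u hu, hM j v hv]

end psdRank

section Blocks

variable {n : ℕ} {κ : Type} (E : Set (Fin n × Fin n)) (c : Fin n → κ) (i : κ)

abbrev BlockEdges : Type := {e : Fin n × Fin n // e ∈ E ∧ c e.1 = i ∧ c e.2 = i}

def blockProj (X : Matrix {v // c v = i} {v // c v = i} ℝ) : BlockEdges E c i → ℝ :=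
  fun q => X ⟨q.1.1, q.2.2.1⟩ ⟨q.1.2, q.2.2.2⟩

def restrictBlock (y : E → ℝ) : BlockEdges E c i → ℝ :=
  fun q => y ⟨q.1, q.2.1⟩

theorem continuous_restrictBlock : Continuous (restrictBlock E c i) :=
  continuous_pi fun _ => continuous_apply _

variable [DecidableEq κ]

def extendBlock (z : BlockEdges E c i → ℝ) : E → ℝ :=
  fun e => if h : c e.1.1 = i ∧ c e.1.2 = i then z ⟨e.1, e.2, h⟩ else 0

theorem continuous_extendBlock : Continuous (extendBlock E c i) := by
  refine continuous_pi fun e => ?_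
  unfold extendBlock
  split_ifs
  exacts [continuous_apply _, continuous_const]

variable {E c} {r : ℕ}

theorem image_proj_psdRank_eq_iInter (hpart : ∀ p ∈ E, c p.1 = c p.2) :
    proj E '' psdRank (Fin n) r =
      ⋂ i, restrictBlock E c i ⁻¹' (blockProj E c i '' psdRank {v // c v = i} r) := by
  ext y
  simp only [Set.mem_iInter, Set.mem_preimage]
  refine ⟨?_, fun hy => ?_⟩
  · rintro ⟨X, hX, rfl⟩ i
    exact ⟨X.submatrix Subtype.val Subtype.val, submatrix_mem_psdRank hX _, rfl⟩
  · choose X hX hXy using hy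
    obtain ⟨Y, hY, hYX⟩ := exists_mem_psdRank_submatrix_eq c X hX
    refine ⟨Y, hY, funext fun e => ?_⟩
    obtain ⟨j, h₁, h₂⟩ : ∃ j, c e.1.1 = j ∧ c e.1.2 = j := ⟨_, rfl, (hpart e.1 e.2).symm⟩
    have hYe : proj E Y e = X j ⟨_, h₁⟩ ⟨_, h₂⟩ := by
      rw [← hYX]
      rfl
    rw [hYe]
    exact congrFun (hXy j) ⟨e.1, e.2, h₁, h₂⟩

theorem image_blockProj_psdRank_eq_preimage (hpart : ∀ p ∈ E, c p.1 = c p.2) :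
    blockProj E c i '' psdRank {v // c v = i} r =
      extendBlock E c i ⁻¹' (proj E '' psdRank (Fin n) r) := by
  ext z
  refine ⟨?_, ?_⟩
  · rintro ⟨X, hX, rfl⟩
    obtain ⟨Y, hY, hYX⟩ := exists_mem_psdRank_submatrix_eq c (Pi.single i X) fun j => by
      by_cases hj : j = i
      · subst j
        simpa using hX
      · simpa [Pi.single_eq_of_ne hj] using zero_mem_psdRank
    refine ⟨Y, hY, funext fun e => ?_⟩
    obtain ⟨j, h₁, h₂⟩ : ∃ j, c e.1.1 = j ∧ c e.1.2 = j := ⟨_, rfl, (hpart e.1 e.2).symm⟩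
    have hYe : proj E Y e =
        Pi.single (M := fun j => Matrix {v // c v = j} {v // c v = j} ℝ) i X j ⟨_, h₁⟩ ⟨_, h₂⟩ := by
      rw [← hYX]
      rfl
    rw [hYe]
    by_cases hj : j = i
    · subst hj
      simp [extendBlock, blockProj, h₁, h₂]
    · simp [extendBlock, hj, h₁]
  · rintro ⟨X, hX, hXz⟩
    refine ⟨X.submatrix Subtype.val Subtype.val, submatrix_mem_psdRank hX _, funext fun q => ?_⟩
    have hq : proj E X ⟨q.1, q.2.1⟩ = z q := by
      simpa [extendBlock, q.2.2] using congrFun hXz ⟨q.1, q.2.1⟩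
    exact hq

end Blocks

-- The blocks `H_i` are the fibres `c⁻¹(i)`.
theorem stmt4_general (n k : ℕ) (E : Set (Fin n × Fin n))
    (c : Fin n → Fin k)
    (hpart : ∀ p ∈ E, c p.1 = c p.2) (r : ℕ) :
    IsClosed (proj E '' psdRank (Fin n) r) ↔
      ∀ i : Fin k,
        IsClosed ((fun X : Matrix {v : Fin n // c v = i} {v : Fin n // c v = i} ℝ =>
            fun q : {e : Fin n × Fin n // e ∈ E ∧ c e.1 = i ∧ c e.2 = i} =>
              X ⟨q.1.1, q.2.2.1⟩ ⟨q.1.2, q.2.2.2⟩) ''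
          psdRank {v : Fin n // c v = i} r) := by
  refine ⟨fun h i => ?_, fun h => ?_⟩
  · have := h.preimage (continuous_extendBlock E c i)
    rwa [← image_blockProj_psdRank_eq_preimage i hpart] at this
  · rw [image_proj_psdRank_eq_iInter hpart]
    exact isClosed_iInter fun i => (h i).preimage (continuous_restrictBlock E c i)

/-- Let `H₁,…,H_k` be a partition of the vertices (encoded by a
surjective colouring `c : Fin n → Fin k`, with blocks `H_i = c⁻¹(i)`) such that
every pair in `E` has both endpoints in the same block.  Then `P(Sⁿᵣ₊)` is closed
if and only if each restricted projection `P_{H_i}(Sⁿⁱᵣ₊)` is closed. -/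
theorem stmt4 (n k : ℕ) (hn : 2 ≤ n) (E : Set (Fin n × Fin n))
    (hup : ∀ p ∈ E, p.1 ≤ p.2)
    (c : Fin n → Fin k) (hsurj : Function.Surjective c)
    (hpart : ∀ p ∈ E, c p.1 = c p.2) (r : ℕ) :
    IsClosed (proj E '' psdRank (Fin n) r) ↔
      ∀ i : Fin k,
        IsClosed ((fun X : Matrix {v : Fin n // c v = i} {v : Fin n // c v = i} ℝ =>
            fun q : {e : Fin n × Fin n // e ∈ E ∧ c e.1 = i ∧ c e.2 = i} =>
              X ⟨q.1.1, q.2.2.1⟩ ⟨q.1.2, q.2.2.2⟩) ''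
          psdRank {v : Fin n // c v = i} r) :=
  stmt4_general n k E c hpart r
end

section
/- If every vertex of G is looped, i.e., ii ∈ E for all i ∈ V, then P(S^n_{r+}) is closed for every integer r with 0 ≤ r ≤ n. -/
open Matrix

/-! A PSD matrix of rank at most `r` is a Gram matrix `A * Aᵀ` with `A` of size `n × r`
(diagonalize and keep the square roots of the nonzero eigenvalues). Since
`A i k ^ 2 ≤ (A * Aᵀ) i i`, a bound on the diagonal entries, all of which `P` observes when
every vertex is looped, confines `A` to a box; so `A ↦ P (A * Aᵀ)` is a proper map and its
range is closed. -/

namespace Matrix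

variable {ι κ S R : Type*} [Fintype κ] [Fintype S]

theorem submatrix_mul_transpose_submatrix_of_injective [CommSemiring R] (W : Matrix ι κ R)
    {e : S → κ} (he : Function.Injective e) (hW : ∀ k ∉ Set.range e, ∀ i, W i k = 0) :
    W.submatrix id e * (W.submatrix id e)ᵀ = W * Wᵀ := by
  ext i j
  simp only [mul_apply, transpose_apply, submatrix_apply, id]
  exact Fintype.sum_of_injective e he _ _ (fun k hk => by simp [hW k hk]) fun _ => rfl

theorem sq_le_mul_transpose_self_apply_self (A : Matrix ι κ ℝ) (i : ι) (k : κ) :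
    A i k ^ 2 ≤ (A * Aᵀ) i i := by
  simpa [mul_apply, sq] using
    Finset.single_le_sum (fun l _ => mul_self_nonneg (A i l)) (Finset.mem_univ k)

variable [Fintype ι] [DecidableEq ι]

theorem PosSemidef.exists_eq_mul_transpose_of_rank_le_s6 {X : Matrix ι ι ℝ} (hX : X.PosSemidef)
    {r : ℕ} (hr : X.rank ≤ r) : ∃ A : Matrix ι (Fin r) ℝ, X = A * Aᵀ := by
  set d := hX.isHermitian.eigenvalues
  set U : Matrix ι ι ℝ := (hX.isHermitian.eigenvectorUnitary : Matrix ι ι ℝ)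
  set W := U * diagonal (fun i => √(d i))
  have hsqrt : diagonal (fun i => √(d i)) * diagonal (fun i => √(d i)) = diagonal d := by
    rw [diagonal_mul_diagonal]
    exact congrArg diagonal (funext fun i => Real.mul_self_sqrt (hX.eigenvalues_nonneg i))
  have hXW : X = W * Wᵀ := by
    calc X = U * diagonal d * Uᵀ := by
          conv_lhs => rw [hX.isHermitian.spectral_theorem]
          simp [U, Unitary.conjStarAlgAut_apply, star_eq_conjTranspose]
          rfl
      _ = W * Wᵀ := by
          rw [← hsqrt]; simp only [W, transpose_mul, diagonal_transpose, mul_assoc]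
  set V := W.submatrix id (Subtype.val : {i // d i ≠ 0} → ι)
  have hXV : X = V * Vᵀ := by
    rw [hXW, submatrix_mul_transpose_submatrix_of_injective W Subtype.val_injective]
    intro k hk i
    have : d k = 0 := by simpa using hk
    simp [W, this]
  have hcard : Fintype.card {i // d i ≠ 0} ≤ Fintype.card (Fin r) := by
    rwa [Fintype.card_fin, ← hX.isHermitian.rank_eq_card_non_zero_eigs]
  obtain ⟨e⟩ := Function.Embedding.nonempty_of_card_le hcard
  set A : Matrix ι (Fin r) ℝ := of fun i => Function.extend e (V i) 0
  have hAV : A.submatrix id e = V := by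
    ext i s
    simp [A, e.injective.extend_apply]
  refine ⟨A, ?_⟩
  rw [hXV, ← hAV, submatrix_mul_transpose_submatrix_of_injective A e.injective]
  intro k hk i
  simp [A, Function.extend_apply' _ _ _ hk]

end Matrix

theorem psdRank_eq_range_mul_transpose (ι : Type) [Fintype ι] [DecidableEq ι] (r : ℕ) :
    psdRank ι r = Set.range fun A : Matrix ι (Fin r) ℝ ↦ A * Aᵀ := by
  ext X
  constructor
  · rintro ⟨hX, hr⟩
    obtain ⟨A, rfl⟩ := hX.exists_eq_mul_transpose_of_rank_le_s6 hr
    exact ⟨A, rfl⟩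
  · rintro ⟨A, rfl⟩
    refine ⟨by simpa using posSemidef_self_mul_conjTranspose A, ?_⟩
    calc (A * Aᵀ).rank ≤ A.rank := rank_mul_le_left A Aᵀ
      _ ≤ r := by simpa using rank_le_card_width A

theorem isProperMap_proj_mul_transpose {n : ℕ} {E : Set (Fin n × Fin n)}
    (hloops : ∀ i, (i, i) ∈ E) (κ : Type*) [Fintype κ] :
    IsProperMap fun A : Matrix (Fin n) κ ℝ ↦ proj E (A * Aᵀ) := by
  have hcont : Continuous fun A : Matrix (Fin n) κ ℝ ↦ proj E (A * Aᵀ) :=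
    continuous_pi fun p => by
      simp only [proj, mul_apply, transpose_apply]
      fun_prop
  refine isProperMap_iff_isCompact_preimage.2 ⟨hcont, fun K hK => ?_⟩
  have hdiag (i : Fin n) : BddAbove ((fun y : E → ℝ => y ⟨(i, i), hloops i⟩) '' K) :=
    (hK.image (continuous_apply _)).bddAbove
  choose R hR using hdiag
  refine (isCompact_univ_pi fun i => isCompact_univ_pi fun _ =>
    isCompact_Icc (a := -√(R i)) (b := √(R i))).of_isClosed_subset
    (hK.isClosed.preimage hcont) fun A hA i _ k _ => ?_
  exact abs_le.1 <| Real.abs_le_sqrt <|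
    (sq_le_mul_transpose_self_apply_self A i k).trans (hR i ⟨_, hA, rfl⟩)

theorem stmt6_general (n : ℕ) (E : Set (Fin n × Fin n))
    (hloops : ∀ i : Fin n, (i, i) ∈ E)
    (r : ℕ) :
    IsClosed (proj E '' psdRank (Fin n) r) := by
  rw [psdRank_eq_range_mul_transpose, ← Set.range_comp]
  exact (isProperMap_proj_mul_transpose hloops (Fin r)).isClosed_range

/-- If every vertex of `G` is looped then `P(Sⁿᵣ₊)` is closed
for every integer `r` with `0 ≤ r ≤ n`. -/
theorem stmt6 (n : ℕ) (hn : 2 ≤ n) (E : Set (Fin n × Fin n))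
    (hup : ∀ p ∈ E, p.1 ≤ p.2)
    (hloops : ∀ i : Fin n, (i, i) ∈ E)
    (r : ℕ) (hr : r ≤ n) :
    IsClosed (proj E '' psdRank (Fin n) r) :=
  stmt6_general n E hloops r
end

section
/- Suppose G has no loops and contains a triangle, i.e., three distinct vertices i, j, k with ij ∈ E, ik ∈ E and jk ∈ E. Then P(S^n_{1+}) is not closed. -/
/-!
Put `u = 𝟙_{i,j}`, `w = e_k` and `v_t = t • u + t⁻¹ • w`. Off the diagonal the rank-one PSD matrix
`v_t v_tᵀ` has entries `t² u_a u_b + (u wᵀ + w uᵀ)_{ab}`, because `w_a w_b = 0` for `a ≠ b`. As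
`t → 0` its projection therefore tends to the projection of `u wᵀ + w uᵀ`, whose entries on the
triangle are `1` at `ik`, `jk` and `0` at `ij`. No symmetric matrix of rank at most one has this
pattern: its `2 × 2` minors vanish, so `X_ik² X_jk² = (X_ii X_kk)(X_jj X_kk) = X_ij² X_kk² = 0`.
-/

open Matrix

open Filter Topology

namespace Matrix

variable {m n K : Type*} [Field K]

theorem mul_eq_mul_of_rank_le_one [Fintype n] {X : Matrix m n K} (hX : X.rank ≤ 1)
    (a b : m) (c d : n) : X a c * X b d = X a d * X b c := by
  by_contra hne
  have hdet : (X.submatrix ![a, b] ![c, d]).det ≠ 0 := by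
    rw [det_fin_two]
    simpa [sub_eq_zero] using hne
  have hrank := (X.rank_submatrix_le ![a, b] ![c, d]).trans hX
  rw [rank_of_isUnit _ ((isUnit_iff_isUnit_det _).mpr hdet.isUnit)] at hrank
  simp at hrank

theorem IsSymm.apply_ne_zero_of_rank_le_one [Fintype m] {X : Matrix m m K} (hS : X.IsSymm)
    (hX : X.rank ≤ 1) {i j k : m} (hik : X i k ≠ 0) (hjk : X j k ≠ 0) : X i j ≠ 0 := by
  intro hij
  have hi : X i i * X k k = X i k ^ 2 := by
    rw [mul_eq_mul_of_rank_le_one hX i k i k, hS.apply i k, sq]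
  have hj : X j j * X k k = X j k ^ 2 := by
    rw [mul_eq_mul_of_rank_le_one hX j k j k, hS.apply j k, sq]
  have hiijj : X i i * X j j = 0 := by
    rw [mul_eq_mul_of_rank_le_one hX i j i j, hij, zero_mul]
  have : (X i k * X j k) ^ 2 = 0 := by
    linear_combination -X j k ^ 2 * hi - X i i * X k k * hj + X k k ^ 2 * hiijj
  exact mul_ne_zero hik hjk (pow_eq_zero_iff two_ne_zero |>.mp this)

end Matrix

theorem vecMulVec_self_mem_psdRank_one {ι : Type} [Fintype ι] [DecidableEq ι] (v : ι → ℝ) :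
    vecMulVec v v ∈ psdRank ι 1 :=
  ⟨by simpa using posSemidef_vecMulVec_self_star v, rank_vecMulVec_le v v⟩

theorem vecMulVec_smul_add_inv_smul_single_apply_of_ne {ι K : Type*} [Field K] [DecidableEq ι]
    (u : ι → K) (k : ι) {t : K} (ht : t ≠ 0) {a b : ι} (hab : a ≠ b) :
    vecMulVec (t • u + t⁻¹ • Pi.single k 1) (t • u + t⁻¹ • Pi.single k 1) a b =
      t ^ 2 * (u a * u b) + (vecMulVec u (Pi.single k 1) + vecMulVec (Pi.single k 1) u) a b := by
  have hsingle : (Pi.single k 1 : ι → K) a * (Pi.single k 1 : ι → K) b = 0 := by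
    by_cases ha : a = k
    · simp [ha ▸ hab]
    · simp [ha]
  simp only [vecMulVec_apply, Matrix.add_apply, Pi.add_apply, Pi.smul_apply, smul_eq_mul]
  field_simp
  linear_combination hsingle

theorem tendsto_proj_vecMulVec {n : ℕ} {E : Set (Fin n × Fin n)} (hloop : ∀ v, (v, v) ∉ E)
    (u : Fin n → ℝ) (k : Fin n) :
    Tendsto (fun t : ℝ => proj E (vecMulVec (t • u + t⁻¹ • Pi.single k 1)
      (t • u + t⁻¹ • Pi.single k 1))) (𝓝[≠] 0)
      (𝓝 (proj E (vecMulVec u (Pi.single k 1) + vecMulVec (Pi.single k 1) u))) := by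
  rw [tendsto_pi_nhds]
  rintro ⟨⟨a, b⟩, hp⟩
  have hab : a ≠ b := by
    rintro rfl
    exact hloop a hp
  set c := (vecMulVec u (Pi.single k 1) + vecMulVec (Pi.single k 1) u) a b
  have hlim : Tendsto (fun t : ℝ => t ^ 2 * (u a * u b) + c) (𝓝[≠] 0) (𝓝 c) := by
    have hcont : Continuous fun t : ℝ => t ^ 2 * (u a * u b) + c := by fun_prop
    simpa using (hcont.tendsto 0).mono_left nhdsWithin_le_nhds
  refine hlim.congr' (eventually_nhdsWithin_of_forall fun t ht => ?_)
  exact (vecMulVec_smul_add_inv_smul_single_apply_of_ne u k ht hab).symm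

theorem apply_eq_of_proj_eq {n : ℕ} {E : Set (Fin n × Fin n)} {X Y : Matrix (Fin n) (Fin n) ℝ}
    (hX : X.IsSymm) (hY : Y.IsSymm) (h : proj E X = proj E Y) {a b : Fin n}
    (hab : (a, b) ∈ E ∨ (b, a) ∈ E) : X a b = Y a b := by
  rcases hab with hab | hba
  · exact congrFun h ⟨_, hab⟩
  · rw [← hX.apply, ← hY.apply]
    exact congrFun h ⟨_, hba⟩

theorem stmt8_general (n : ℕ) (E : Set (Fin n × Fin n))
    (hloop : ∀ v : Fin n, (v, v) ∉ E)
    (i j k : Fin n) (hij : i ≠ j) (hik : i ≠ k) (hjk : j ≠ k)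
    (e1 : (i, j) ∈ E ∨ (j, i) ∈ E)
    (e2 : (i, k) ∈ E ∨ (k, i) ∈ E)
    (e3 : (j, k) ∈ E ∨ (k, j) ∈ E) :
    ¬ IsClosed (proj E '' psdRank (Fin n) 1) := by
  set u : Fin n → ℝ := Pi.single i 1 + Pi.single j 1
  set M := vecMulVec u (Pi.single k 1) + vecMulVec (Pi.single k 1) u
  intro hclosed
  obtain ⟨X, ⟨hpsd, hrank⟩, hXM⟩ := hclosed.mem_of_tendsto (tendsto_proj_vecMulVec hloop u k)
    (Eventually.of_forall fun t => ⟨_, vecMulVec_self_mem_psdRank_one _, rfl⟩)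
  have hX : X.IsSymm := isHermitian_iff_isSymm.mp hpsd.isHermitian
  have hM : M.IsSymm := IsSymm.ext fun a b => by
    simp only [M, Matrix.add_apply, vecMulVec_apply]
    ring
  have hXM_edge : ∀ {a b}, (a, b) ∈ E ∨ (b, a) ∈ E → X a b = M a b :=
    apply_eq_of_proj_eq hX hM hXM
  have hXik : X i k ≠ 0 := by
    rw [hXM_edge e2]
    simp [M, u, vecMulVec_apply, hij, hik, hjk]
  have hXjk : X j k ≠ 0 := by
    rw [hXM_edge e3]
    simp [M, u, vecMulVec_apply, hij, hik, hjk]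
  have hXij : X i j = 0 := by
    rw [hXM_edge e1]
    simp [M, u, vecMulVec_apply, hij, hik, hjk]
  exact hX.apply_ne_zero_of_rank_le_one hrank hXik hXjk hXij

/-- If `G` has no loops and contains a triangle, then
`P(Sⁿ₁₊)` is not closed. -/
theorem stmt8 (n : ℕ) (hn : 2 ≤ n) (E : Set (Fin n × Fin n))
    (hup : ∀ p ∈ E, p.1 ≤ p.2)
    (hloop : ∀ v : Fin n, (v, v) ∉ E)
    (i j k : Fin n) (hij : i ≠ j) (hik : i ≠ k) (hjk : j ≠ k)
    (e1 : (i, j) ∈ E ∨ (j, i) ∈ E)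
    (e2 : (i, k) ∈ E ∨ (k, i) ∈ E)
    (e3 : (j, k) ∈ E ∨ (k, j) ∈ E) :
    ¬ IsClosed (proj E '' psdRank (Fin n) 1) :=
  stmt8_general n E hloop i j k hij hik hjk e1 e2 e3
end

section
/- Suppose G is loopless and complete bipartite: V is the disjoint union of two nonempty sets V1 and V2 and E consists exactly of all pairs with one endpoint in V1 and the other in V2. Then P(S^n_{r+}) is closed for every integer r with 0 ≤ r ≤ n. -/
open Matrix

/-!
Split `V = s ⊔ sᶜ`. Since every edge joins `s` to `sᶜ`, a vector `f ∈ ℝ^E` is exactly the data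
of an `s × sᶜ` matrix `B f`, and `f ∈ P(S^n_{r+})` iff `rank (B f) ≤ r`: a Gram matrix of rank
`≤ r` has off-diagonal blocks of rank `≤ r`, and conversely a factorization `B f = U W` through
`ℝ^r` makes `B f` the off-diagonal block of the Gram matrix of the columns of `[Uᵀ W]`.
Rank `≤ r` is a closed condition, so `P(S^n_{r+})` is the preimage of a closed set under a
continuous map.
-/

namespace Matrix

variable {m n : Type*} [Fintype n]

theorem exists_mul_eq_of_rank_le {K : Type*} [Field K] {A : Matrix m n K}
    {r : ℕ} (h : A.rank ≤ r) : ∃ (U : Matrix m (Fin r) K) (W : Matrix (Fin r) n K), U * W = A := by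
  obtain ⟨f, hf⟩ := finrank_le_iff_exists_linearMap (R := K) (M' := Fin r → K).1
    (h.trans_eq (Module.finrank_fin_fun K).symm)
  obtain ⟨g, hg⟩ := f.exists_leftInverse_of_injective (LinearMap.ker_eq_bot.2 hf)
  classical
  refine ⟨LinearMap.toMatrix' (A.mulVecLin.range.subtype ∘ₗ g),
    LinearMap.toMatrix' (f ∘ₗ A.mulVecLin.rangeRestrict), ?_⟩
  rw [← LinearMap.toMatrix'_comp, LinearMap.comp_assoc, ← LinearMap.comp_assoc _ f g, hg,
    LinearMap.id_comp, LinearMap.rangeRestrict, LinearMap.subtype_comp_codRestrict,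
    ← toLin'_apply', LinearMap.toMatrix'_toLin']

theorem isClosed_setOf_rank_le [Fintype m] (r : ℕ) :
    IsClosed {A : Matrix m n ℝ | A.rank ≤ r} := by
  classical
  let Φ : Matrix m n ℝ →ₗ[ℝ] (n → ℝ) →L[ℝ] m → ℝ :=
    LinearMap.toContinuousLinearMap.toLinearMap ∘ₗ toLin'.toLinearMap
  have hΦ : {A : Matrix m n ℝ | A.rank ≤ r} =
      Φ ⁻¹' {f | ↑(r + 1) ≤ (f : (n → ℝ) →ₗ[ℝ] m → ℝ).rank}ᶜ := by
    ext A
    have hrank : (Φ A : (n → ℝ) →ₗ[ℝ] m → ℝ).rank = A.rank := (Module.finrank_eq_rank _ _).symm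
    simp only [Set.mem_preimage, Set.mem_compl_iff, Set.mem_ofPred_eq, hrank, not_le]
    norm_cast
    omega
  rw [hΦ]
  exact (isOpen_setOfPred_nat_le_rank (r + 1)).isClosed_compl.preimage
    (LinearMap.continuous_of_finiteDimensional Φ)

end Matrix

section OffDiagonalBlock

variable {ι : Type} [Fintype ι] [DecidableEq ι] (s : Set ι) [DecidablePred (· ∈ s)]

theorem image_submatrix_compl_psdRank (r : ℕ) :
    (fun X : Matrix ι ι ℝ => X.submatrix ((↑) : s → ι) ((↑) : ↥sᶜ → ι)) '' psdRank ι r =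
      {A | A.rank ≤ r} := by
  ext A
  constructor
  · rintro ⟨X, ⟨-, hX⟩, rfl⟩
    exact (rank_submatrix_le X _ _).trans hX
  · intro hA
    obtain ⟨U, W, rfl⟩ := exists_mul_eq_of_rank_le hA
    let Y : Matrix (Fin r) ι ℝ := of fun k v => if h : v ∈ s then U ⟨v, h⟩ k else W k ⟨v, h⟩
    refine ⟨Yᴴ * Y, ⟨posSemidef_conjTranspose_mul_self Y, ?_⟩, ?_⟩
    · rw [rank_conjTranspose_mul_self]
      exact (rank_le_card_height Y).trans_eq (Fintype.card_fin r)
    · ext i j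
      have hj : (j : ι) ∉ s := j.2
      simp [mul_apply, Y, hj]

end OffDiagonalBlock

section CompleteBipartite

variable {n : ℕ} {E : Set (Fin n × Fin n)} {s : Set (Fin n)}

theorem min_max_mem_of_bipartite (hup : ∀ p ∈ E, p.1 ≤ p.2)
    (hbip : ∀ i j : Fin n, ((i, j) ∈ E ∨ (j, i) ∈ E) ↔ ((i ∈ s ∧ j ∈ sᶜ) ∨ (i ∈ sᶜ ∧ j ∈ s))) :
    ∀ i ∈ s, ∀ j ∈ sᶜ, (min i j, max i j) ∈ E := by
  intro i hi j hj
  rcases (hbip i j).2 (Or.inl ⟨hi, hj⟩) with h | h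
  · rwa [min_eq_left (hup _ h), max_eq_right (hup _ h)]
  · rwa [min_eq_right (hup _ h), max_eq_left (hup _ h)]

/-- Edges `(a, c) ∈ E` have `a ≤ c`, so the edge joining `i` and `j` is `(min i j, max i j)`. -/
def crossBlock (hE : ∀ i ∈ s, ∀ j ∈ sᶜ, (min i j, max i j) ∈ E) (f : E → ℝ) :
    Matrix s ↥sᶜ ℝ :=
  of fun i j => f ⟨(min i j, max i j), hE i i.2 j j.2⟩

variable (hE : ∀ i ∈ s, ∀ j ∈ sᶜ, (min i j, max i j) ∈ E)

theorem continuous_crossBlock : Continuous (crossBlock hE) :=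
  continuous_matrix fun _ _ => continuous_apply _

theorem crossBlock_proj {X : Matrix (Fin n) (Fin n) ℝ} (hX : X.IsSymm) :
    crossBlock hE (proj E X) = X.submatrix (↑) (↑) := by
  ext i j
  rcases le_total (i : Fin n) j with h | h
  · simp [crossBlock, proj, h]
  · simp [crossBlock, proj, h, hX.apply]

theorem proj_eq_of_crossBlock_eq (hup : ∀ p ∈ E, p.1 ≤ p.2)
    (hbip : ∀ i j : Fin n, ((i, j) ∈ E ∨ (j, i) ∈ E) ↔ ((i ∈ s ∧ j ∈ sᶜ) ∨ (i ∈ sᶜ ∧ j ∈ s)))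
    {X : Matrix (Fin n) (Fin n) ℝ} (hX : X.IsSymm) {f : E → ℝ}
    (h : crossBlock hE f = X.submatrix (↑) (↑)) : proj E X = f := by
  funext ⟨⟨a, c⟩, hp⟩
  have hac : a ≤ c := hup _ hp
  rcases (hbip a c).1 (Or.inl hp) with ⟨ha, hc⟩ | ⟨ha, hc⟩
  · simpa [crossBlock, proj, hac] using (congr_fun₂ h ⟨a, ha⟩ ⟨c, hc⟩).symm
  · simpa [crossBlock, proj, hac, hX.apply] using (congr_fun₂ h ⟨c, hc⟩ ⟨a, ha⟩).symm

theorem proj_image_psdRank (hup : ∀ p ∈ E, p.1 ≤ p.2)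
    (hbip : ∀ i j : Fin n, ((i, j) ∈ E ∨ (j, i) ∈ E) ↔ ((i ∈ s ∧ j ∈ sᶜ) ∨ (i ∈ sᶜ ∧ j ∈ s)))
    [DecidablePred (· ∈ s)] (r : ℕ) :
    proj E '' psdRank (Fin n) r = crossBlock hE ⁻¹' {A | A.rank ≤ r} := by
  rw [← image_submatrix_compl_psdRank]
  ext f
  constructor
  · rintro ⟨X, hX, rfl⟩
    exact ⟨X, hX, (crossBlock_proj hE (isHermitian_iff_isSymm.1 hX.1.isHermitian)).symm⟩
  · rintro ⟨X, hX, hXf⟩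
    exact ⟨X, hX, proj_eq_of_crossBlock_eq hE hup hbip
      (isHermitian_iff_isSymm.1 hX.1.isHermitian) hXf.symm⟩

end CompleteBipartite

theorem stmt12_general (n : ℕ) (E : Set (Fin n × Fin n))
    (hup : ∀ p ∈ E, p.1 ≤ p.2)
    (V1 V2 : Set (Fin n))
    (hpart : ∀ v, v ∈ V1 ↔ v ∉ V2)
    (hbip : ∀ i j : Fin n, ((i, j) ∈ E ∨ (j, i) ∈ E) ↔
      ((i ∈ V1 ∧ j ∈ V2) ∨ (i ∈ V2 ∧ j ∈ V1)))
    (r : ℕ) :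
    IsClosed (proj E '' psdRank (Fin n) r) := by
  classical
  obtain rfl : V2 = V1ᶜ := Set.ext fun v => by simp [hpart]
  have hE := min_max_mem_of_bipartite hup hbip
  rw [proj_image_psdRank hE hup hbip]
  exact (isClosed_setOf_rank_le r).preimage (continuous_crossBlock hE)

/-- If `G` is loopless and complete bipartite (vertices
partitioned into nonempty parts `V1`, `V2`, and the adjacent pairs are exactly
those with one endpoint in each part), then `P(Sⁿᵣ₊)` is closed for every
`0 ≤ r ≤ n`. -/
theorem stmt12 (n : ℕ) (hn : 2 ≤ n) (E : Set (Fin n × Fin n))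
    (hup : ∀ p ∈ E, p.1 ≤ p.2)
    (hloop : ∀ v : Fin n, (v, v) ∉ E)
    (V1 V2 : Set (Fin n)) (h1 : V1.Nonempty) (h2 : V2.Nonempty)
    (hpart : ∀ v, v ∈ V1 ↔ v ∉ V2)
    (hbip : ∀ i j : Fin n, ((i, j) ∈ E ∨ (j, i) ∈ E) ↔
      ((i ∈ V1 ∧ j ∈ V2) ∨ (i ∈ V2 ∧ j ∈ V1)))
    (r : ℕ) (hr : r ≤ n) :
    IsClosed (proj E '' psdRank (Fin n) r) :=
  stmt12_general n E hup V1 V2 hpart hbip r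
end

section
/- Let G be a connected loopless graph on n ≥ 2 vertices. Then P(S^n_{1+}) is closed if and only if G is a complete bipartite graph. -/
open Matrix

/-!
The image consists of the vectors `(x_i x_j)_{ij ∈ E}`, since a rank-one PSD matrix is `x xᵀ`.
If `G` is complete bipartite with sides `V1, V2`, such a vector is just an arbitrary rank-one
`V1 × V2` matrix, so the image is cut out by the vanishing of 2 × 2 minors and is closed.
Otherwise connectivity produces a path `a₂ b₁ a₁ b₂` with `a₂ b₂ ∉ E`; scaling `x` by `t` on
`{a₁, b₁}` and by `1/t` on `{a₂, b₂}` and letting `t → 0` gives a limit point with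
`x_{a₁} x_{b₂} = x_{a₂} x_{b₁} = 1` but `x_{a₁} x_{b₁} = 0`, which no `x` realises.
-/

def TwoMinorsVanish {α β K : Type*} [Mul K] (h : α → β → K) : Prop :=
  ∀ a a' b b', h a b * h a' b' = h a b' * h a' b

theorem TwoMinorsVanish.exists_mul_eq {α β K : Type*} [Field K] {h : α → β → K}
    (hh : TwoMinorsVanish h) : ∃ (y : α → K) (z : β → K), ∀ a b, h a b = y a * z b := by
  by_cases h0 : ∃ a b, h a b ≠ 0
  · obtain ⟨a₀, b₀, hne⟩ := h0
    refine ⟨fun a => h a b₀, fun b => h a₀ b / h a₀ b₀, fun a b => ?_⟩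
    field_simp
    linear_combination hh a a₀ b b₀
  · push Not at h0
    exact ⟨0, 0, fun a b => by simp [h0]⟩

theorem TwoMinorsVanish.exists_mul_self_eq {ι : Type*} {X : ι → ι → ℝ} (hX : TwoMinorsVanish X)
    (hsymm : ∀ i j, X i j = X j i) (hdiag : ∀ i, 0 ≤ X i i) :
    ∃ x : ι → ℝ, ∀ i j, X i j = x i * x j := by
  by_cases h0 : ∃ k, X k k ≠ 0
  · obtain ⟨k, hk⟩ := h0
    have hkpos : 0 < X k k := (hdiag k).lt_of_ne' hk
    refine ⟨fun i => X i k / √(X k k), fun i j => ?_⟩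
    field_simp
    rw [Real.sq_sqrt hkpos.le]
    linear_combination hX i k j k - X i k * hsymm j k
  · push Not at h0
    refine ⟨0, fun i j => ?_⟩
    have hsq : X i j ^ 2 = 0 := by
      linear_combination hX i j j i + X i j * hsymm i j + X i i * h0 j
    simpa using hsq

theorem Matrix.twoMinorsVanish_of_rank_le_one {m n K : Type*} [Fintype n] [Field K]
    {A : Matrix m n K} (hA : A.rank ≤ 1) : TwoMinorsVanish A := by
  intro i i' j j'
  have hdet : (A.submatrix ![i, i'] ![j, j']).det = 0 := by
    by_contra hB
    have hrank := rank_of_isUnit _ ((isUnit_iff_isUnit_det _).mpr (Ne.isUnit hB))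
    have := rank_submatrix_le A ![i, i'] ![j, j']
    rw [hrank, Fintype.card_fin] at this
    omega
  rw [det_fin_two] at hdet
  simpa [sub_eq_zero] using hdet

theorem mem_psdRank_one_iff {ι : Type} [Fintype ι] [DecidableEq ι] {X : Matrix ι ι ℝ} :
    X ∈ psdRank ι 1 ↔ ∃ x : ι → ℝ, X = vecMulVec x x := by
  constructor
  · rintro ⟨hpsd, hrank⟩
    obtain ⟨x, hx⟩ := (twoMinorsVanish_of_rank_le_one hrank).exists_mul_self_eq
      (fun i j => hpsd.isHermitian.apply j i) fun i => hpsd.diag_nonneg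
    exact ⟨x, Matrix.ext hx⟩
  · rintro ⟨x, rfl⟩
    exact ⟨by simpa using posSemidef_vecMulVec_self_star x, rank_vecMulVec_le x x⟩

section EdgeProducts

variable {n : ℕ} {E : Set (Fin n × Fin n)}

def edgeProducts (E : Set (Fin n × Fin n)) : Set (E → ℝ) :=
  Set.range fun (x : Fin n → ℝ) (p : E) => x p.1.1 * x p.1.2

theorem proj_image_psdRank_one : proj E '' psdRank (Fin n) 1 = edgeProducts E := by
  ext f
  simp only [Set.mem_image, mem_psdRank_one_iff, edgeProducts, Set.mem_range]
  constructor
  · rintro ⟨_, ⟨x, rfl⟩, rfl⟩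
    exact ⟨x, rfl⟩
  · rintro ⟨x, rfl⟩
    exact ⟨_, ⟨x, rfl⟩, rfl⟩

open Classical in
noncomputable def edgeVal (f : E → ℝ) (i j : Fin n) : ℝ :=
  if h : (i, j) ∈ E then f ⟨_, h⟩ else if h : (j, i) ∈ E then f ⟨_, h⟩ else 0

theorem edgeVal_of_mem (f : E → ℝ) {i j : Fin n} (h : (i, j) ∈ E) :
    edgeVal f i j = f ⟨_, h⟩ :=
  dif_pos h

theorem edgeVal_comm (hup : ∀ p ∈ E, p.1 ≤ p.2) (f : E → ℝ) (i j : Fin n) :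
    edgeVal f i j = edgeVal f j i := by
  by_cases hij : (i, j) ∈ E <;> by_cases hji : (j, i) ∈ E
  · obtain rfl : i = j := le_antisymm (hup _ hij) (hup _ hji)
    rfl
  all_goals simp [edgeVal, hij, hji]

theorem continuous_edgeVal (i j : Fin n) : Continuous fun f : E → ℝ => edgeVal f i j := by
  unfold edgeVal
  split_ifs <;> fun_prop

theorem edgeVal_eq_of_symm {F : Fin n → Fin n → ℝ} (hF : ∀ i j, F i j = F j i) {i j : Fin n}
    (hij : (i, j) ∈ E ∨ (j, i) ∈ E) : edgeVal (fun p : E => F p.1.1 p.1.2) i j = F i j := by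
  by_cases h : (i, j) ∈ E
  · exact edgeVal_of_mem _ h
  · simp [edgeVal, h, hij.resolve_left h, hF j i]

theorem isClosed_edgeProducts_of_bipartite (hup : ∀ p ∈ E, p.1 ≤ p.2) {V1 V2 : Set (Fin n)}
    (hpart : ∀ v, v ∈ V1 ↔ v ∉ V2)
    (hedge : ∀ i j, ((i, j) ∈ E ∨ (j, i) ∈ E) ↔ (i ∈ V1 ∧ j ∈ V2 ∨ i ∈ V2 ∧ j ∈ V1)) :
    IsClosed (edgeProducts E) := by
  have hS : edgeProducts E = {f | TwoMinorsVanish fun (a : V1) (b : V2) => edgeVal f a b} := by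
    ext f
    constructor
    · rintro ⟨x, rfl⟩ a a' b b'
      have hprod : ∀ (a : V1) (b : V2),
          edgeVal (fun p : E => x p.1.1 * x p.1.2) a b = x a * x b := fun a b =>
        edgeVal_eq_of_symm (fun i j => mul_comm (x i) (x j)) ((hedge _ _).2 (Or.inl ⟨a.2, b.2⟩))
      simp only [hprod]
      ring
    · intro hf
      obtain ⟨y, z, hyz⟩ := hf.exists_mul_eq
      classical
      let x : Fin n → ℝ := fun i =>
        if h : i ∈ V1 then y ⟨i, h⟩ else z ⟨i, not_not.mp ((hpart i).not.mp h)⟩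
      have hprod : ∀ a ∈ V1, ∀ b ∈ V2, edgeVal f a b = x a * x b := fun a ha b hb => by
        have hb' : b ∉ V1 := fun h => (hpart b).1 h hb
        simp [x, ha, hb', hyz ⟨a, ha⟩ ⟨b, hb⟩]
      refine ⟨x, funext fun p => ?_⟩
      rw [← edgeVal_of_mem f p.2]
      rcases (hedge _ _).1 (Or.inl p.2) with ⟨h1, h2⟩ | ⟨h1, h2⟩
      · exact (hprod _ h1 _ h2).symm
      · rw [edgeVal_comm hup, hprod _ h2 _ h1, mul_comm]
  rw [hS]
  simp only [TwoMinorsVanish, Set.ofPred_forall]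
  refine isClosed_iInter fun a => isClosed_iInter fun a' => isClosed_iInter fun b =>
    isClosed_iInter fun b' => isClosed_eq ?_ ?_ <;>
  exact (continuous_edgeVal _ _).mul (continuous_edgeVal _ _)

theorem mem_closure_edgeProducts (u w : Fin n → ℝ) (hw : ∀ p ∈ E, w p.1 * w p.2 = 0) :
    (fun p : E => u p.1.1 * w p.1.2 + w p.1.1 * u p.1.2) ∈ closure (edgeProducts E) := by
  let ψ : ℝ → E → ℝ := fun t p =>
    t ^ 2 * (u p.1.1 * u p.1.2) + (u p.1.1 * w p.1.2 + w p.1.1 * u p.1.2)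
  have hψ : Continuous ψ := by fun_prop
  have hmaps : Set.MapsTo ψ {0}ᶜ (edgeProducts E) := fun t (ht : t ≠ 0) =>
    ⟨t • u + t⁻¹ • w, funext fun p => by
      simp only [ψ, Pi.add_apply, Pi.smul_apply, smul_eq_mul]
      field_simp
      linear_combination hw p.1 p.2⟩
  convert map_mem_closure hψ (closure_compl_singleton (0 : ℝ) ▸ Set.mem_univ 0) hmaps using 1
  simp [ψ]

theorem not_isClosed_edgeProducts (hloop : ∀ v : Fin n, (v, v) ∉ E) {a₁ b₁ a₂ b₂ : Fin n}
    (h₁₁ : (graphOf E).Adj a₁ b₁) (h₁₂ : (graphOf E).Adj a₁ b₂) (h₂₁ : (graphOf E).Adj a₂ b₁)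
    (h₂₂ : ¬ (graphOf E).Adj a₂ b₂) : ¬ IsClosed (edgeProducts E) := by
  intro hclosed
  have ha : a₁ ≠ a₂ := by rintro rfl; exact h₂₂ h₁₂
  have hb : b₁ ≠ b₂ := by rintro rfl; exact h₂₂ h₂₁
  let u : Fin n → ℝ := fun i => if i = a₁ ∨ i = b₁ then 1 else 0
  let w : Fin n → ℝ := fun i => if i = a₂ ∨ i = b₂ then 1 else 0
  have hw : ∀ p ∈ E, w p.1 * w p.2 = 0 := by
    rintro ⟨i, j⟩ hp
    have hij : (graphOf E).Adj i j := ⟨fun h => hloop i (h ▸ hp), Or.inl hp⟩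
    simp only [w]
    split_ifs with hi hj <;> try simp only [mul_zero, zero_mul]
    rcases hi with rfl | rfl <;> rcases hj with rfl | rfl
    exacts [absurd rfl hij.ne, absurd hij h₂₂, absurd hij.symm h₂₂, absurd rfl hij.ne]
  obtain ⟨x, hx⟩ := hclosed.closure_eq ▸ mem_closure_edgeProducts u w hw
  have hval : ∀ i j, (graphOf E).Adj i j → x i * x j = u i * w j + w i * u j := fun i j hij => by
    have := congrArg (fun f => edgeVal f i j) hx
    simp only at this
    rwa [edgeVal_eq_of_symm (fun i j => mul_comm (x i) (x j)) hij.2,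
      edgeVal_eq_of_symm (F := fun i j => u i * w j + w i * u j) (fun i j => by ring) hij.2] at this
  have h12 := hval _ _ h₁₂
  have h21 := hval _ _ h₂₁
  have h11 := hval _ _ h₁₁
  simp only [u, w, ha, hb, ha.symm, hb.symm, h₁₂.ne, h₁₂.ne.symm, h₂₁.ne, h₂₁.ne.symm, true_or,
    or_true, or_self, ↓reduceIte, mul_one, mul_zero, add_zero, zero_add, mul_eq_zero]
    at h12 h21 h11
  rcases h11 with h | h <;> simp [h] at h12 h21

end EdgeProducts

theorem SimpleGraph.Connected.exists_completeBipartite_partition {V : Type*} {G : SimpleGraph V}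
    [Nontrivial V] (hG : G.Connected)
    (hsq : ∀ a₁ b₁ a₂ b₂, G.Adj a₁ b₁ → G.Adj a₁ b₂ → G.Adj a₂ b₁ → G.Adj a₂ b₂) :
    ∃ V1 V2 : Set V, V1.Nonempty ∧ V2.Nonempty ∧ (∀ v, v ∈ V1 ↔ v ∉ V2) ∧
      ∀ i j, G.Adj i j ↔ (i ∈ V1 ∧ j ∈ V2 ∨ i ∈ V2 ∧ j ∈ V1) := by
  obtain ⟨b, a, hba⟩ : ∃ b a, G.Adj b a :=
    ⟨_, hG.preconnected.exists_adj_of_nontrivial (Classical.arbitrary V)⟩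
  have hstep : ∀ u v, G.Adj u v → G.Adj u a ∨ G.Adj u b → G.Adj v a ∨ G.Adj v b := by
    rintro u v huv (hu | hu)
    · exact Or.inr (hsq a u v b hu.symm hba.symm huv.symm)
    · exact Or.inl (hsq b u v a hu.symm hba huv.symm)
  have hcover : ∀ v, G.Adj v a ∨ G.Adj v b := fun v => by
    induction (G.reachable_iff_reflTransGen b v).mp (hG.preconnected b v) with
    | refl => exact Or.inl hba
    | tail _ huv ih => exact hstep _ _ huv ih
  have hnot_both : ∀ v, G.Adj v a → ¬ G.Adj v b := fun v hva hvb =>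
    G.loopless.irrefl a (hsq v b a a hvb hva hba.symm)
  refine ⟨{v | G.Adj v b}, {v | G.Adj v a}, ⟨a, hba.symm⟩, ⟨b, hba⟩,
    fun v => ⟨fun hvb hva => hnot_both v hva hvb, (hcover v).resolve_left⟩, fun i j => ⟨?_, ?_⟩⟩
  · intro hij
    rcases hcover i with hia | hib
    · exact Or.inr ⟨hia, hsq a i j b hia.symm hba.symm hij.symm⟩
    · exact Or.inl ⟨hib, hsq b i j a hib.symm hba hij.symm⟩
  · rintro (⟨hib, hja⟩ | ⟨hia, hjb⟩)
    · exact hsq a b i j hba.symm hja.symm hib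
    · exact hsq b a i j hba hjb.symm hia

/-- For a connected loopless graph `G` on `n ≥ 2` vertices,
`P(Sⁿ₁₊)` is closed if and only if `G` is a complete bipartite graph. -/
theorem stmt13 (n : ℕ) (hn : 2 ≤ n) (E : Set (Fin n × Fin n))
    (hup : ∀ p ∈ E, p.1 ≤ p.2)
    (hloop : ∀ v : Fin n, (v, v) ∉ E)
    (hconn : (graphOf E).Connected) :
    IsClosed (proj E '' psdRank (Fin n) 1) ↔
      ∃ V1 V2 : Set (Fin n), V1.Nonempty ∧ V2.Nonempty ∧ (∀ v, v ∈ V1 ↔ v ∉ V2) ∧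
        ∀ i j : Fin n, ((i, j) ∈ E ∨ (j, i) ∈ E) ↔
          ((i ∈ V1 ∧ j ∈ V2) ∨ (i ∈ V2 ∧ j ∈ V1)) := by
  have hadj : ∀ i j, (graphOf E).Adj i j ↔ ((i, j) ∈ E ∨ (j, i) ∈ E) := fun i j =>
    ⟨And.right, fun h => ⟨by rintro rfl; exact h.elim (hloop i) (hloop i), h⟩⟩
  have : Nontrivial (Fin n) := Fin.nontrivial_iff_two_le.mpr hn
  rw [proj_image_psdRank_one]
  constructor
  · intro hclosed
    simp only [← hadj]
    refine hconn.exists_completeBipartite_partition fun a₁ b₁ a₂ b₂ h₁₁ h₁₂ h₂₁ => ?_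
    by_contra h₂₂
    exact not_isClosed_edgeProducts hloop h₁₁ h₁₂ h₂₁ h₂₂ hclosed
  · rintro ⟨V1, V2, -, -, hpart, hedge⟩
    exact isClosed_edgeProducts_of_bipartite hup hpart hedge
end

section
/- If G has no loops, then P(S^n_{(n−1)+}) is closed. -/
/-!
The projection is onto `ℝ^E`. Since `E` has neither diagonal entries nor a pair `ij, ji`, every
`y : ℝ^E` is the projection of a symmetric matrix `A`; subtracting the smallest eigenvalue `λ` of
`A` changes only the diagonal, and `A - λ I` is PSD and singular, so of rank at most `n - 1`.
-/

open Matrix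

open scoped MatrixOrder ComplexOrder

theorem Matrix.rank_lt_card_width_of_mulVec_eq_zero {m n K : Type*} [Field K] [Fintype n]
    {A : Matrix m n K} {v : n → K} (hv : v ≠ 0) (hAv : A *ᵥ v = 0) :
    A.rank < Fintype.card n := by
  have hker : 0 < Module.finrank K (LinearMap.ker A.mulVecLin) :=
    Module.finrank_pos_iff_exists_ne_zero.mpr ⟨⟨v, hAv⟩, Subtype.coe_ne_coe.mp hv⟩
  have hrank := LinearMap.finrank_range_add_finrank_ker A.mulVecLin
  rw [Module.finrank_fintype_fun_eq_card] at hrank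
  rw [Matrix.rank]
  omega

namespace Matrix.IsHermitian

variable {𝕜 ι : Type*} [RCLike 𝕜] [Fintype ι] [DecidableEq ι] {A : Matrix ι ι 𝕜}

theorem posSemidef_sub_smul_one (hA : A.IsHermitian) {c : ℝ} (hc : ∀ i, c ≤ hA.eigenvalues i) :
    (A - c • 1).PosSemidef := by
  rw [← le_iff, ← Algebra.algebraMap_eq_smul_one,
    algebraMap_le_iff_le_spectrum hA.isSelfAdjoint, hA.spectrum_real_eq_range_eigenvalues]
  rintro _ ⟨i, rfl⟩
  exact hc i

theorem exists_posSemidef_sub_smul_one_rank_lt [Nonempty ι] (hA : A.IsHermitian) :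
    ∃ c : ℝ, (A - c • 1).PosSemidef ∧ (A - c • 1).rank < Fintype.card ι := by
  obtain ⟨i₀, hmin⟩ := Finite.exists_min hA.eigenvalues
  refine ⟨hA.eigenvalues i₀, hA.posSemidef_sub_smul_one hmin,
    rank_lt_card_width_of_mulVec_eq_zero (v := hA.eigenvectorBasis i₀)
      ((WithLp.ofLp_eq_zero 2).ne.mpr (hA.eigenvectorBasis.orthonormal.ne_zero i₀)) ?_⟩
  rw [sub_mulVec, hA.mulVec_eigenvectorBasis, smul_mulVec, one_mulVec, sub_eq_zero,
    RCLike.real_smul_eq_coe_smul (K := 𝕜)]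

end Matrix.IsHermitian

section edgeMatrix

variable {ι : Type*} {E : Set (ι × ι)}

open Classical in
noncomputable def edgeMatrix (E : Set (ι × ι)) (y : E → ℝ) : Matrix ι ι ℝ := fun i j =>
  if h : (i, j) ∈ E then y ⟨(i, j), h⟩ else if h' : (j, i) ∈ E then y ⟨(j, i), h'⟩ else 0

theorem edgeMatrix_apply_of_mem (y : E → ℝ) {i j : ι} (h : (i, j) ∈ E) :
    edgeMatrix E y i j = y ⟨(i, j), h⟩ :=
  dif_pos h

theorem edgeMatrix_isHermitian (hE : ∀ i j, (i, j) ∈ E → (j, i) ∉ E) (y : E → ℝ) :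
    (edgeMatrix E y).IsHermitian := by
  ext i j
  simp only [conjTranspose_apply, star_trivial, edgeMatrix]
  by_cases hji : (j, i) ∈ E
  · simp [hji, hE j i hji]
  · simp [hji]

end edgeMatrix

theorem proj_sub_smul_one {n : ℕ} {E : Set (Fin n × Fin n)} (hloop : ∀ v : Fin n, (v, v) ∉ E)
    (A : Matrix (Fin n) (Fin n) ℝ) (c : ℝ) : proj E (A - c • 1) = proj E A := by
  funext ⟨⟨i, j⟩, hij⟩
  have hne : i ≠ j := by rintro rfl; exact hloop i hij
  simp [proj, one_apply_ne hne]

theorem proj_edgeMatrix {n : ℕ} (E : Set (Fin n × Fin n)) (y : E → ℝ) :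
    proj E (edgeMatrix E y) = y :=
  funext fun ⟨_, h⟩ => edgeMatrix_apply_of_mem y h

/-- If `G` has no loops, then `P(Sⁿ₍ₙ₋₁₎₊)` is closed. -/
theorem stmt16 (n : ℕ) (hn : 2 ≤ n) (E : Set (Fin n × Fin n))
    (hup : ∀ p ∈ E, p.1 ≤ p.2)
    (hloop : ∀ v : Fin n, (v, v) ∉ E) :
    IsClosed (proj E '' psdRank (Fin n) (n - 1)) := by
  have : Nonempty (Fin n) := ⟨⟨0, by omega⟩⟩
  have hE : ∀ i j, (i, j) ∈ E → (j, i) ∉ E := fun i j hij hji => by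
    obtain rfl : i = j := le_antisymm (hup _ hij) (hup _ hji)
    exact hloop i hij
  suffices h : proj E '' psdRank (Fin n) (n - 1) = Set.univ by
    rw [h]
    exact isClosed_univ
  refine Set.eq_univ_of_forall fun y => ?_
  obtain ⟨c, hpsd, hrank⟩ :=
    (edgeMatrix_isHermitian hE y).exists_posSemidef_sub_smul_one_rank_lt
  refine ⟨edgeMatrix E y - c • 1, ⟨hpsd, ?_⟩, ?_⟩
  · rw [Fintype.card_fin] at hrank
    omega
  · rw [proj_sub_smul_one hloop, proj_edgeMatrix]
end

section
/- Let G be a loopless graph on n ≥ 3 vertices. Then P(S^n_{(n−2)+}) is not closed if and only if G is the complete graph K_n, i.e., every pair of distinct vertices is an edge of G. -/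
/-
If some pair `{a, b}` is not an edge, every `x ∈ ℝ^E` lifts. Adding a large multiple of the
identity to the prescribed entries on `V ∖ {a, b}` gives a positive definite `M`, i.e. the
Gram matrix of a basis of `ℝ^(n-2)`; the vectors for `a` and `b` only need prescribed inner
products with that basis, and nothing constrains the pair `ab` itself. This is `X = Dᵀ M⁻¹ D`.
So the image is all of `ℝ^E`, which is closed.

For `Kₙ`, the path pattern (`1` on the superdiagonal, `0` elsewhere above it) is a limit of Gram
matrices of `n` vectors in `ℝ^(n-2)`, but every matrix with this pattern contains a unitriangular
minor of order `n - 1`, so it has rank at least `n - 1`.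
-/

open Matrix

open scoped ComplexOrder

theorem Matrix.IsHermitian.exists_posDef_algebraMap_add {n 𝕜 : Type*} [Fintype n] [DecidableEq n]
    [RCLike 𝕜] {A : Matrix n n 𝕜} (hA : A.IsHermitian) :
    ∃ T : ℝ, (algebraMap ℝ (Matrix n n 𝕜) T + A).PosDef := by
  refine ⟨1 + ∑ i, |hA.eigenvalues i|, ?_⟩
  have hB : (algebraMap ℝ (Matrix n n 𝕜) (1 + ∑ i, |hA.eigenvalues i|) + A).IsHermitian :=
    (IsSelfAdjoint.algebraMap _ (.all _)).add hA
  rw [hB.posDef_iff_eigenvalues_pos]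
  intro i
  have hi := hB.eigenvalues_mem_spectrum_real i
  rw [← spectrum.singleton_add_eq, hA.spectrum_real_eq_range_eigenvalues, Set.singleton_add] at hi
  obtain ⟨_, ⟨j, rfl⟩, hj⟩ := hi
  rw [← hj]
  have := Finset.single_le_sum (fun k _ => abs_nonneg (hA.eigenvalues k)) (Finset.mem_univ j)
  linarith [neg_abs_le (hA.eigenvalues j)]

theorem Matrix.transpose_mul_nonsing_inv_mul_apply {W ι R : Type*} [Fintype W] [DecidableEq W]
    [CommRing R] {M : Matrix W W R} (hM : IsUnit M.det) {D : Matrix W ι R} {f : W → ι}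
    (hD : ∀ v w, D v (f w) = M v w) (i : ι) (w : W) :
    (Dᵀ * M⁻¹ * D) i (f w) = D w i := by
  calc (Dᵀ * M⁻¹ * D) i (f w) = (Dᵀ * M⁻¹ * M) i w := by
        simp only [mul_apply (M := Dᵀ * M⁻¹), hD]
    _ = D w i := by rw [Matrix.mul_assoc, nonsing_inv_mul _ hM, Matrix.mul_one, transpose_apply]

theorem exists_psdRank_completion_of_missing_edge {ι : Type} [Fintype ι] [DecidableEq ι]
    {Y : Matrix ι ι ℝ} (hY : Y.IsSymm) {a b : ι} (hab : a ≠ b) :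
    ∃ X ∈ psdRank ι (Fintype.card ι - 2),
      ∀ i j, i ≠ j → s(i, j) ≠ s(a, b) → X i j = Y i j := by
  set S := ({a, b} : Finset ι)ᶜ
  have hYS : (Y.submatrix (Subtype.val : S → ι) Subtype.val).IsHermitian :=
    (isHermitian_iff_isSelfAdjoint.mpr hY).submatrix _
  obtain ⟨T, hM⟩ := hYS.exists_posDef_algebraMap_add
  set M := algebraMap ℝ (Matrix S S ℝ) T + Y.submatrix Subtype.val Subtype.val
  let D : Matrix S ι ℝ := fun w j => if h : j ∈ S then M w ⟨j, h⟩ else Y w j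
  have hD : ∀ (w : S) (i : ι), i ≠ w → D w i = Y i w := by
    intro w i hi
    by_cases h : i ∈ S
    · simp [D, h, M, algebraMap_matrix_apply, Subtype.ext_iff, Ne.symm hi, hY.apply]
    · simp [D, h, hY.apply]
  have hXD := transpose_mul_nonsing_inv_mul_apply (f := Subtype.val) (D := D)
    (isUnit_iff_ne_zero.mpr hM.det_pos.ne') (fun v w => dif_pos w.2)
  have hX : (Dᵀ * M⁻¹ * D).PosSemidef := hM.inv.posSemidef.conjTranspose_mul_mul_same D
  refine ⟨Dᵀ * M⁻¹ * D, ⟨hX, ?_⟩, fun i j hij hE => ?_⟩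
  · calc (Dᵀ * M⁻¹ * D).rank ≤ D.rank := rank_mul_le_right _ _
      _ ≤ Fintype.card S := rank_le_card_height D
      _ = Fintype.card ι - 2 := by
        rw [Fintype.card_coe, Finset.card_compl, Finset.card_pair hab]
  · by_cases hj : j ∈ S
    · exact (hXD i ⟨j, hj⟩).trans (hD ⟨j, hj⟩ i hij)
    · have hi : i ∈ S := by
        simp only [S, Finset.mem_compl, Finset.mem_insert, Finset.mem_singleton] at hj ⊢
        rintro (rfl | rfl) <;> rcases not_not.mp hj with rfl | rfl <;>
          simp_all [Sym2.eq_swap]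
      rw [← hX.isHermitian.apply, star_trivial, hXD j ⟨i, hi⟩, hD ⟨i, hi⟩ j hij.symm, hY.apply]

theorem proj_image_psdRank_eq_univ {n : ℕ} {E : Set (Fin n × Fin n)}
    (hup : ∀ p ∈ E, p.1 ≤ p.2) (hloop : ∀ v, (v, v) ∉ E) {a b : Fin n} (hab : a ≠ b)
    (haE : (a, b) ∉ E) (hbE : (b, a) ∉ E) :
    proj E '' psdRank (Fin n) (n - 2) = Set.univ := by
  classical
  refine Set.eq_univ_of_forall fun x => ?_
  let g : Fin n × Fin n → ℝ := fun p => if h : p ∈ E then x ⟨p, h⟩ else 0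
  have hY : (Matrix.of fun i j => g (min i j, max i j)).IsSymm := by
    ext i j
    simp only [transpose_apply, of_apply, min_comm, max_comm]
  obtain ⟨X, hX, hXY⟩ := exists_psdRank_completion_of_missing_edge hY hab
  rw [Fintype.card_fin] at hX
  refine ⟨X, hX, funext fun ⟨(i, j), hp⟩ => ?_⟩
  have hij : i ≠ j := by rintro rfl; exact hloop i hp
  have hE : s(i, j) ≠ s(a, b) := by
    rw [Ne, Sym2.eq_iff]
    rintro (⟨rfl, rfl⟩ | ⟨rfl, rfl⟩) <;> contradiction
  rw [proj, hXY i j hij hE, of_apply, min_eq_left (hup _ hp), max_eq_right (hup _ hp)]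
  exact dif_pos (α := ℝ) hp

theorem transpose_mul_self_mem_psdRank {ι : Type} [Fintype ι] [DecidableEq ι] {r : ℕ}
    (C : Matrix (Fin r) ι ℝ) : Cᵀ * C ∈ psdRank ι r := by
  refine ⟨?_, (rank_transpose_mul_self C).trans_le ?_⟩
  · simpa only [conjTranspose_eq_transpose_of_trivial] using posSemidef_conjTranspose_mul_self C
  · exact (rank_le_card_height C).trans_eq (Fintype.card_fin r)

theorem le_rank_of_superdiagonal {R : Type*} [Field R] {m : ℕ}
    {X : Matrix (Fin (m + 1)) (Fin (m + 1)) R}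
    (hX : ∀ i j : Fin (m + 1), i < j → X i j = if (j : ℕ) = i + 1 then 1 else 0) :
    m ≤ X.rank := by
  set B := X.submatrix Fin.castSucc Fin.succ
  have hB : B.IsLowerTriangular := fun i j hij => by
    have hij : i < j := hij
    simp [B, hX _ _ (Fin.castSucc_lt_succ_iff.mpr hij.le), Fin.val_ne_of_ne hij.ne']
  have hBdiag : ∀ i, B i i = 1 := fun i => by simp [B, hX _ _ (Fin.castSucc_lt_succ (i := i))]
  have hBunit : IsUnit B := by
    simp [isUnit_iff_isUnit_det, det_of_isLowerTriangular B hB, hBdiag]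
  calc m = B.rank := by rw [rank_of_isUnit B hBunit, Fintype.card_fin]
    _ ≤ X.rank := rank_submatrix_le _ _ _

/-- Its columns are `v₀ = ε e₀` and `vⱼ = ε⁻¹ e_{j-1} + ε e_{j-2}` (with `e_k = 0` unless
`0 ≤ k < m`): consecutive columns have inner product `1`, `⟪v₀, v₂⟫ = ε²`, and all other pairs
are orthogonal. -/
noncomputable def pathGramFactor (m : ℕ) (ε : ℝ) : Matrix (Fin m) (Fin (m + 2)) ℝ :=
  fun k j =>
    if (j : ℕ) = 0 ∧ (k : ℕ) = 0 then ε
    else if (k : ℕ) + 1 = j then ε⁻¹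
    else if (k : ℕ) + 2 = j then ε else 0

theorem pathGramFactor_gram_apply {m : ℕ} (hm : 0 < m) {ε : ℝ} (hε : ε ≠ 0)
    {i j : Fin (m + 2)} (hij : i < j) :
    ((pathGramFactor m ε)ᵀ * pathGramFactor m ε) i j =
      if (j : ℕ) = i + 1 then 1 else if (i : ℕ) = 0 ∧ (j : ℕ) = 2 then ε ^ 2 else 0 := by
  have hij : (i : ℕ) < j := hij
  have hj := j.isLt
  -- Columns `i < j` can both be nonzero only in row `i - 1` (row `0` when `i = 0`).
  rw [mul_apply, Finset.sum_eq_single ⟨i - 1, by omega⟩]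
  · simp only [transpose_apply, pathGramFactor]
    split_ifs <;> first | omega | simp [hε, sq]
  · intro k _ hk
    have hk : (k : ℕ) ≠ i - 1 := fun h => hk (Fin.ext h)
    simp only [transpose_apply, pathGramFactor]
    split_ifs <;> first | omega | simp
  · simp

theorem not_isClosed_proj_image_psdRank {m : ℕ} (hm : 0 < m)
    {E : Set (Fin (m + 2) × Fin (m + 2))}
    (hE : ∀ p ∈ E, p.1 < p.2) (hcomp : ∀ i j, i < j → (i, j) ∈ E) :
    ¬ IsClosed (proj E '' psdRank (Fin (m + 2)) m) := by
  intro hclosed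
  let g : ℝ → E → ℝ := fun ε p =>
    if (p.1.2 : ℕ) = p.1.1 + 1 then 1
    else if (p.1.1 : ℕ) = 0 ∧ (p.1.2 : ℕ) = 2 then ε ^ 2 else 0
  have hg : Continuous g := continuous_pi fun p => by dsimp only [g]; split_ifs <;> fun_prop
  have hmem : ∀ ε ≠ 0, g ε ∈ proj E '' psdRank (Fin (m + 2)) m := fun ε hε =>
    ⟨_, transpose_mul_self_mem_psdRank (pathGramFactor m ε),
      funext fun p => pathGramFactor_gram_apply hm hε (hE _ p.2)⟩
  obtain ⟨X, hX, hXg⟩ : g 0 ∈ proj E '' psdRank (Fin (m + 2)) m :=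
    hclosed.mem_of_tendsto ((hg.tendsto 0).mono_left nhdsWithin_le_nhds)
      ((eventually_mem_nhdsWithin (s := {0}ᶜ)).mono hmem)
  have hrank := le_rank_of_superdiagonal (m := m + 1) (X := X) fun i j hij => by
    simpa [g, proj] using congrFun hXg ⟨(i, j), hcomp i j hij⟩
  exact absurd hX.2 (by omega)

/-- For a loopless graph `G` on `n ≥ 3` vertices,
`P(Sⁿ₍ₙ₋₂₎₊)` is not closed if and only if `G` is the complete graph `Kₙ`. -/
theorem stmt17 (n : ℕ) (hn : 3 ≤ n) (E : Set (Fin n × Fin n))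
    (hup : ∀ p ∈ E, p.1 ≤ p.2)
    (hloop : ∀ v : Fin n, (v, v) ∉ E) :
    ¬ IsClosed (proj E '' psdRank (Fin n) (n - 2)) ↔
      ∀ i j : Fin n, i ≠ j → ((i, j) ∈ E ∨ (j, i) ∈ E) := by
  obtain ⟨m, rfl⟩ : ∃ m, n = m + 2 := ⟨n - 2, by omega⟩
  have hlt : ∀ p ∈ E, p.1 < p.2 := by
    rintro ⟨i, j⟩ hp
    exact (hup _ hp).lt_of_ne fun h : i = j => hloop i (h ▸ hp)
  constructor
  · intro hnc i j hij
    by_contra! h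
    exact hnc (proj_image_psdRank_eq_univ hup hloop hij h.1 h.2 ▸ isClosed_univ)
  · intro hcomp
    rw [Nat.add_sub_cancel]
    exact not_isClosed_proj_image_psdRank (by omega) hlt fun i j hij =>
      (hcomp i j hij.ne).resolve_right fun h => (hlt _ h).not_gt hij
end
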